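/- (Surjectivity along lines; Boyland's lemma) For every x₀ ∈ ℝ and every line L in ℝ^d parallel to v (i.e. L = {z₀ + t v : t ∈ ℝ} for some z₀ ∈ ℝ^d), there exists a point z ∈ L with Φ̂(z) = x₀. In particular Φ̂: ℝ^d → ℝ is onto. -/

import Mathlib

/-!
Periodicity of `G` makes `F̂` commute with integer translations up to `M`:
`F̂ (z + ν) = F̂ z + M ν`. As `vᵀ Mⁿ = mⁿ vᵀ`, the normalised limit turns this into
`k Φ̂ (z + ν) = k Φ̂ z + v ⬝ᵥ ν`. With `ν = v`, moving by `v` along a line parallel to `v`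
changes `Φ̂` by the nonzero constant `(v ⬝ᵥ v) / k`, so the intermediate value theorem
makes `Φ̂` onto on that line.
-/

open Filter Topology Matrix

theorem Function.iterate_map_add_of_map_add {α β : Type*} [Add α] {F : α → α} {τ : β → α}
    {A : β → β} (hF : ∀ z ν, F (z + τ ν) = F z + τ (A ν)) (n : ℕ) (z : α) (ν : β) :
    F^[n] (z + τ ν) = F^[n] z + τ (A^[n] ν) := by
  induction n with
  | zero => rfl
  | succ n ih => rw [Function.iterate_succ_apply', Function.iterate_succ_apply',
      Function.iterate_succ_apply', ih, hF]

theorem Matrix.dotProduct_iterate_mulVec_of_vecMul_eq_smul {ι R : Type*} [Fintype ι]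
    [CommSemiring R] {M : Matrix ι ι R} {v : ι → R} {m : R} (hv : v ᵥ* M = m • v) (n : ℕ)
    (ν : ι → R) : v ⬝ᵥ (M *ᵥ ·)^[n] ν = m ^ n * v ⬝ᵥ ν := by
  induction n with
  | zero => simp
  | succ n ih =>
    rw [Function.iterate_succ_apply', dotProduct_mulVec, hv, smul_dotProduct, ih, smul_eq_mul]
    ring

theorem Continuous.surjective_of_map_add_one {f : ℝ → ℝ} (hf : Continuous f) {c : ℝ}
    (hc : c ≠ 0) (hfc : ∀ t, f (t + 1) = f t + c) : Function.Surjective f := by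
  have hper : Function.Periodic (fun t => f t - c * t) 1 := fun t => by
    simp only [hfc]; ring
  have hint (n : ℤ) : f n = f 0 + n * c := by
    have := hper.int_mul_eq n
    simp only [mul_one, mul_zero, sub_zero] at this
    linarith
  intro y
  obtain ⟨N, hN⟩ := exists_nat_ge (|y - f 0| / |c|)
  have hyN : |y - f 0| ≤ N * |c| := (div_le_iff₀ (abs_pos.mpr hc)).mp hN
  have hy : y ∈ Set.uIcc (f (-N : ℤ)) (f (N : ℤ)) := by
    rw [hint, hint, Set.mem_uIcc]
    push_cast
    rcases abs_le.mp hyN with ⟨h1, h2⟩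
    rcases hc.lt_or_gt with hc | hc
    · rw [abs_of_neg hc] at h1 h2; right; constructor <;> linarith
    · rw [abs_of_pos hc] at h1 h2; left; constructor <;> linarith
  obtain ⟨t, -, ht⟩ := intermediate_value_uIcc hf.continuousOn hy
  exact ⟨t, ht⟩

section Lift

variable {ι : Type*} [Fintype ι] {M : Matrix ι ι ℤ} {F : (ι → ℝ) → (ι → ℝ)}

theorem map_add_intCast_of_periodic {G : (ι → ℝ) → (ι → ℝ)}
    (hF : ∀ z, F z = M.map Int.cast *ᵥ z + G z)
    (hG : ∀ z (ν : ι → ℤ), G (z + Int.cast ∘ ν) = G z) (z : ι → ℝ) (ν : ι → ℤ) :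
    F (z + Int.cast ∘ ν) = F z + Int.cast ∘ (M *ᵥ ν) := by
  have hcast : Int.cast ∘ (M *ᵥ ν) = M.map Int.cast *ᵥ (Int.cast ∘ ν : ι → ℝ) :=
    funext ((Int.castRingHom ℝ).map_mulVec M ν)
  rw [hF, hF, hG, mulVec_add, hcast]
  abel

theorem dotProduct_iterate_add_intCast
    (hF : ∀ z ν, F (z + Int.cast ∘ ν) = F z + Int.cast ∘ (M *ᵥ ν)) {v : ι → ℤ} {m : ℤ}
    (hv : v ᵥ* M = m • v) (n : ℕ) (z : ι → ℝ) (ν : ι → ℤ) :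
    (Int.cast ∘ v : ι → ℝ) ⬝ᵥ F^[n] (z + Int.cast ∘ ν) =
      (Int.cast ∘ v) ⬝ᵥ F^[n] z + (m ^ n * v ⬝ᵥ ν : ℤ) := by
  rw [Function.iterate_map_add_of_map_add hF, dotProduct_add,
    ← dotProduct_iterate_mulVec_of_vecMul_eq_smul hv]
  congr 1
  exact ((Int.castRingHom ℝ).map_dotProduct _ _).symm

theorem map_add_intCast_of_tendsto
    (hF : ∀ z ν, F (z + Int.cast ∘ ν) = F z + Int.cast ∘ (M *ᵥ ν)) {v : ι → ℤ} {m : ℤ}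
    (hv : v ᵥ* M = m • v) (hm : m ≠ 0) {φ : (ι → ℝ) → ℝ}
    (hφ : ∀ z, Tendsto (fun n : ℕ => ((m : ℝ) ^ n)⁻¹ * (Int.cast ∘ v) ⬝ᵥ F^[n] z) atTop
      (𝓝 (φ z)))
    (z : ι → ℝ) (ν : ι → ℤ) : φ (z + Int.cast ∘ ν) = φ z + (v ⬝ᵥ ν : ℤ) := by
  refine tendsto_nhds_unique (hφ _) ?_
  simp_rw [dotProduct_iterate_add_intCast hF hv, mul_add]
  push_cast
  simp_rw [inv_mul_cancel_left₀ (pow_ne_zero _ (Int.cast_ne_zero (α := ℝ) |>.mpr hm))]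
  exact (hφ z).add_const _

end Lift

theorem phi_onto_along_lines_general
    (d : ℕ)
    (M : Matrix (Fin d) (Fin d) ℤ) (G : (Fin d → ℝ) → (Fin d → ℝ))
    (Fh : (Fin d → ℝ) → (Fin d → ℝ))
    (hFh : ∀ z, Fh z = (fun i => ∑ j, (M i j : ℝ) * z j) + G z)
    (hGper : ∀ (z : Fin d → ℝ) (ν : Fin d → ℤ),
      G (z + fun i => (ν i : ℝ)) = G z)
    (m : ℤ) (hm : 1 < |m|)
    (v : Fin d → ℤ) (hv : v ≠ 0)
    (hvleft : ∀ j, ∑ i, v i * M i j = m * v j)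
    -- k = min{|v·x| : x ∈ ℤ^d, v·x ≠ 0}
    (k : ℤ)
    (hk : IsLeast {n : ℤ | ∃ x : Fin d → ℤ,
      n = |∑ i, v i * x i| ∧ (∑ i, v i * x i) ≠ 0} k)
    -- Φ̂(z) = k⁻¹ lim_{n→∞} m⁻ⁿ v·F̂ⁿ(z), which exists and is continuous
    (Φh : (Fin d → ℝ) → ℝ)
    (hΦlim : ∀ z, Tendsto
      (fun n : ℕ => ((m : ℝ) ^ n)⁻¹ * ∑ i, (v i : ℝ) * (Fh^[n] z) i)
      atTop (nhds ((k : ℝ) * Φh z)))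
    (hΦcont : Continuous Φh) :
    (∀ (x₀ : ℝ) (z₀ : Fin d → ℝ),
      ∃ t : ℝ, Φh (z₀ + t • fun i => (v i : ℝ)) = x₀) ∧
    Function.Surjective Φh := by
  have hshift : ∀ z ν, (k : ℝ) * Φh (z + Int.cast ∘ ν) = k * Φh z + (v ⬝ᵥ ν : ℤ) :=
    map_add_intCast_of_tendsto (map_add_intCast_of_periodic hFh hGper) (funext hvleft)
      (abs_pos.mp (one_pos.trans hm)) hΦlim
  have hk0 : (k : ℝ) ≠ 0 := by
    obtain ⟨x, rfl, hx⟩ := hk.1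
    exact_mod_cast abs_ne_zero.mpr hx
  have hvv : ((v ⬝ᵥ v : ℤ) : ℝ) ≠ 0 := Int.cast_ne_zero.mpr (dotProduct_self_eq_zero.not.mpr hv)
  have line (x₀ : ℝ) (z₀ : Fin d → ℝ) : ∃ t : ℝ, Φh (z₀ + t • fun i => (v i : ℝ)) = x₀ := by
    refine Continuous.surjective_of_map_add_one (by fun_prop) (div_ne_zero hvv hk0)
      (fun t => mul_left_cancel₀ hk0 ?_) x₀
    rw [add_smul, one_smul, ← add_assoc, mul_add, mul_div_cancel₀ _ hk0]
    exact hshift _ v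
  exact ⟨line, fun x₀ => let ⟨t, ht⟩ := line x₀ 0; ⟨_, ht⟩⟩

/-- **Surjectivity along lines (Boyland's lemma).** For every x₀ ∈ ℝ and every
line parallel to v there is a point z on the line with Φ̂(z) = x₀; in
particular Φ̂ is onto. -/
theorem phi_onto_along_lines
    (d : ℕ)
    (M : Matrix (Fin d) (Fin d) ℤ) (G : (Fin d → ℝ) → (Fin d → ℝ))
    (Fh : (Fin d → ℝ) → (Fin d → ℝ))
    (hFh : ∀ z, Fh z = (fun i => ∑ j, (M i j : ℝ) * z j) + G z)
    (hGcont : Continuous G)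
    (hGper : ∀ (z : Fin d → ℝ) (ν : Fin d → ℤ),
      G (z + fun i => (ν i : ℝ)) = G z)
    (m : ℤ) (hm : 1 < |m|)
    (v : Fin d → ℤ) (hv : v ≠ 0)
    (hvleft : ∀ j, ∑ i, v i * M i j = m * v j)
    -- k = min{|v·x| : x ∈ ℤ^d, v·x ≠ 0}
    (k : ℤ)
    (hk : IsLeast {n : ℤ | ∃ x : Fin d → ℤ,
      n = |∑ i, v i * x i| ∧ (∑ i, v i * x i) ≠ 0} k)
    -- Φ̂(z) = k⁻¹ lim_{n→∞} m⁻ⁿ v·F̂ⁿ(z), which exists and is continuous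
    (Φh : (Fin d → ℝ) → ℝ)
    (hΦlim : ∀ z, Tendsto
      (fun n : ℕ => ((m : ℝ) ^ n)⁻¹ * ∑ i, (v i : ℝ) * (Fh^[n] z) i)
      atTop (nhds ((k : ℝ) * Φh z)))
    (hΦcont : Continuous Φh) :
    (∀ (x₀ : ℝ) (z₀ : Fin d → ℝ),
      ∃ t : ℝ, Φh (z₀ + t • fun i => (v i : ℝ)) = x₀) ∧
    Function.Surjective Φh :=
  phi_onto_along_lines_general d M G Fh hFh hGper m hm v hv hvleft k hk Φh hΦlim hΦcont
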